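/- arXiv:0707.0082 — 4 statements merged into one kernel-verified Lean document; each statement's English description precedes it below -/
import Mathlib

section
/- Let H be a real Hilbert space, S a closed subspace with orthogonal projection P, and U a nonempty subset closed under f ↦ 2·Pf - f. Then for every g ∈ H with P g ∈ U, sup_{f ∈ U} ‖g - f‖² ≥ sup_{f ∈ U} ‖P g - f‖². -/
/-! Fix `f ∈ U` and its reflection `f' = 2 • P f - f ∈ U`. The parallelogram law for
`g - P f ± (P f - f)` and Pythagoras across `S ⊕ Sᗮ` give
`‖g - f‖² + ‖g - f'‖² = 2‖g - P g‖² + 2‖P g - f‖²`, so `‖P g - f‖²` is at most the mean,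
hence at most the maximum, of the errors of `g` at `f` and `f'`. -/

open RealInnerProductSpace

section Reflection

variable {H : Type*} [NormedAddCommGroup H] [InnerProductSpace ℝ H] {S : Submodule ℝ H}

theorem Submodule.norm_add_sq_of_mem_of_mem_orthogonal {x y : H} (hx : x ∈ S) (hy : y ∈ Sᗮ) :
    ‖x + y‖ ^ 2 = ‖x‖ ^ 2 + ‖y‖ ^ 2 := by
  rw [norm_add_sq_real, Submodule.inner_right_of_mem_orthogonal hx hy]
  ring

theorem Submodule.norm_sub_sq_add_norm_sub_reflection_sq {g p f q : H}
    (hp : p ∈ S) (hgp : g - p ∈ Sᗮ) (hq : q ∈ S) (hfq : f - q ∈ Sᗮ) :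
    ‖g - f‖ ^ 2 + ‖g - ((2 : ℝ) • q - f)‖ ^ 2 = 2 * ‖g - p‖ ^ 2 + 2 * ‖p - f‖ ^ 2 := by
  have parallelogram := parallelogram_law_with_norm ℝ (g - q) (q - f)
  have hpq : p - q ∈ S := sub_mem hp hq
  have hqf : q - f ∈ Sᗮ := by simpa using Sᗮ.neg_mem hfq
  have pythagoras_g : ‖g - q‖ ^ 2 = ‖g - p‖ ^ 2 + ‖p - q‖ ^ 2 := by
    rw [← sub_add_sub_cancel g p q, add_comm (g - p),
      Submodule.norm_add_sq_of_mem_of_mem_orthogonal hpq hgp, add_comm]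
  have pythagoras_f : ‖p - f‖ ^ 2 = ‖p - q‖ ^ 2 + ‖q - f‖ ^ 2 := by
    rw [← sub_add_sub_cancel p q f, Submodule.norm_add_sq_of_mem_of_mem_orthogonal hpq hqf]
  rw [sub_add_sub_cancel, show g - q - (q - f) = g - ((2 : ℝ) • q - f) by rw [two_smul]; abel]
    at parallelogram
  linarith

theorem Submodule.norm_sub_sq_le_max_of_reflection {g p f q : H}
    (hp : p ∈ S) (hgp : g - p ∈ Sᗮ) (hq : q ∈ S) (hfq : f - q ∈ Sᗮ) :
    ‖p - f‖ ^ 2 ≤ max (‖g - f‖ ^ 2) (‖g - ((2 : ℝ) • q - f)‖ ^ 2) := by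
  have identity := Submodule.norm_sub_sq_add_norm_sub_reflection_sq hp hgp hq hfq
  have residual_nonneg := sq_nonneg ‖g - p‖
  rcases le_total (‖g - f‖ ^ 2) (‖g - ((2 : ℝ) • q - f)‖ ^ 2) with h | h
  · rw [max_eq_right h]; linarith
  · rw [max_eq_left h]; linarith

end Reflection

theorem biSup_le_biSup_of_le_max {ι α : Type*} [CompleteLinearOrder α] {U : Set ι}
    {a b : ι → α} {σ : ι → ι} (hσ : ∀ i ∈ U, σ i ∈ U) (h : ∀ i ∈ U, a i ≤ max (b i) (b (σ i))) :
    ⨆ i ∈ U, a i ≤ ⨆ i ∈ U, b i :=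
  iSup₂_le fun i hi => (h i hi).trans <| max_le (le_iSup₂ (f := fun j _ => b j) i hi)
    (le_iSup₂ (f := fun j _ => b j) (σ i) (hσ i hi))

theorem stmt3_general {H : Type*} [NormedAddCommGroup H] [InnerProductSpace ℝ H]
    (S : Submodule ℝ H) (P : H → H)
    (hPmem : ∀ f, P f ∈ S) (hPorth : ∀ f, f - P f ∈ Sᗮ)
    (U : Set H) (hrefl : ∀ f ∈ U, (2 : ℝ) • P f - f ∈ U)
    (g : H) :
    (⨆ f ∈ U, ((‖P g - f‖ ^ 2 : ℝ) : EReal)) ≤ (⨆ f ∈ U, ((‖g - f‖ ^ 2 : ℝ) : EReal)) := by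
  refine biSup_le_biSup_of_le_max hrefl fun f _ => ?_
  rw [← EReal.coe_strictMono.monotone.map_max, EReal.coe_le_coe_iff]
  exact Submodule.norm_sub_sq_le_max_of_reflection (hPmem g) (hPorth g) (hPmem f) (hPorth f)

/-- If `U` is nonempty and closed under reflection across the closed subspace `S`, then for
every `g` with `P g ∈ U`, projecting `g` onto `S` does not increase the worst-case error. -/
theorem stmt3 {H : Type*} [NormedAddCommGroup H] [InnerProductSpace ℝ H] [CompleteSpace H]
    (S : Submodule ℝ H) (hScl : IsClosed (S : Set H)) (P : H → H)
    (hPmem : ∀ f, P f ∈ S) (hPorth : ∀ f, f - P f ∈ Sᗮ)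
    (U : Set H) (hne : U.Nonempty) (hrefl : ∀ f ∈ U, (2 : ℝ) • P f - f ∈ U)
    (g : H) (hg : P g ∈ U) :
    (⨆ f ∈ U, ((‖P g - f‖ ^ 2 : ℝ) : EReal)) ≤ (⨆ f ∈ U, ((‖g - f‖ ^ 2 : ℝ) : EReal)) :=
  stmt3_general S P hPmem hPorth U hrefl g
end

section
/- Let 𝐊 be symmetric positive definite, y ∈ ℝ^N, λ > 0, and set x̂ = 𝐊(𝐊 + λI)⁻¹y and Δ = λ‖(𝐊+λI)⁻¹y‖₂. Then x̂ is the unique minimizer of x ↦ xᵀ𝐊⁻¹x over the closed Euclidean ball B₂(y, Δ) = {x : ‖x - y‖₂ ≤ Δ}. -/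
/-!
Write `h = (𝐊 + λI)⁻¹y`, so that `x̂ = 𝐊h = y - λh` and `𝐊⁻¹x̂ = h`. Then `x̂` lies on the
boundary of the ball, and Cauchy–Schwarz gives `hᵀ(x - x̂) = hᵀ(x - y) + λ‖h‖² ≥ 0` for every `x`
in the ball: this is the first-order optimality condition of the quadratic form `xᵀ𝐊⁻¹x` at `x̂`.
Expanding the form around `x̂` and using that `𝐊⁻¹` is positive definite makes the minimum strict.
-/

open Matrix

variable {n : Type*} [Fintype n]

lemma dotProduct_le_sqrt_mul_sqrt (u v : n → ℝ) : u ⬝ᵥ v ≤ √(u ⬝ᵥ u) * √(v ⬝ᵥ v) := by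
  simpa only [dotProduct, sq] using Real.sum_mul_le_sqrt_mul_sqrt Finset.univ u v

lemma sqrt_dotProduct_smul_self {l : ℝ} (hl : 0 ≤ l) (v : n → ℝ) :
    √((l • v) ⬝ᵥ (l • v)) = l * √(v ⬝ᵥ v) := by
  rw [smul_dotProduct, dotProduct_smul, smul_eq_mul, smul_eq_mul, ← mul_assoc,
    Real.sqrt_mul (mul_self_nonneg l), Real.sqrt_mul_self hl]

lemma Matrix.mulVec_nonsing_inv_add_smul_one_mulVec [DecidableEq n] {R : Type*} [CommRing R]
    {K : Matrix n n R} {l : R} (hK : IsUnit (K + l • 1).det) (y : n → R) :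
    K *ᵥ ((K + l • 1)⁻¹ *ᵥ y) = y - l • ((K + l • 1)⁻¹ *ᵥ y) := by
  have hy : (K + l • 1) *ᵥ ((K + l • 1)⁻¹ *ᵥ y) = y := by
    rw [mulVec_mulVec, mul_nonsing_inv _ hK, one_mulVec]
  rw [add_mulVec, smul_mulVec, one_mulVec] at hy
  exact eq_sub_of_add_eq hy

lemma sub_dotProduct_nonneg_of_sqrt_le {x y h : n → ℝ} {l : ℝ}
    (hx : √((x - y) ⬝ᵥ (x - y)) ≤ l * √(h ⬝ᵥ h)) :
    0 ≤ (x - (y - l • h)) ⬝ᵥ h := by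
  have hcs : (y - x) ⬝ᵥ h ≤ √((x - y) ⬝ᵥ (x - y)) * √(h ⬝ᵥ h) := by
    simpa only [← neg_sub x y, neg_dotProduct, dotProduct_neg, neg_neg]
      using dotProduct_le_sqrt_mul_sqrt (y - x) h
  have hball : √((x - y) ⬝ᵥ (x - y)) * √(h ⬝ᵥ h) ≤ l * (h ⬝ᵥ h) := by
    calc √((x - y) ⬝ᵥ (x - y)) * √(h ⬝ᵥ h) ≤ l * √(h ⬝ᵥ h) * √(h ⬝ᵥ h) :=
          mul_le_mul_of_nonneg_right hx (Real.sqrt_nonneg _)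
      _ = l * (h ⬝ᵥ h) := by
          rw [mul_assoc, Real.mul_self_sqrt (by simpa using dotProduct_self_star_nonneg h)]
  have hexpand : (x - (y - l • h)) ⬝ᵥ h = l * (h ⬝ᵥ h) - (y - x) ⬝ᵥ h := by
    rw [sub_sub_eq_add_sub, add_sub_right_comm, add_dotProduct, sub_dotProduct, smul_dotProduct,
      sub_dotProduct, smul_eq_mul]
    ring
  linarith

lemma Matrix.IsSymm.add_dotProduct_mulVec_add {R : Type*} [CommRing R] {M : Matrix n n R}
    (hM : M.IsSymm) (d a : n → R) :
    (d + a) ⬝ᵥ M *ᵥ (d + a) = d ⬝ᵥ M *ᵥ d + 2 * (d ⬝ᵥ M *ᵥ a) + a ⬝ᵥ M *ᵥ a := by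
  have hswap : a ⬝ᵥ M *ᵥ d = d ⬝ᵥ M *ᵥ a := by
    rw [dotProduct_mulVec, ← mulVec_transpose, hM.eq, dotProduct_comm]
  simp only [mulVec_add, dotProduct_add, add_dotProduct, hswap]
  ring

lemma Matrix.PosDef.dotProduct_mulVec_lt_of_sub_dotProduct_nonneg {M : Matrix n n ℝ}
    (hM : M.PosDef) {a x : n → ℝ} (hopt : 0 ≤ (x - a) ⬝ᵥ M *ᵥ a) (hne : x ≠ a) :
    a ⬝ᵥ M *ᵥ a < x ⬝ᵥ M *ᵥ x := by
  have hsymm : M.IsSymm := show Mᵀ = M by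
    simpa only [IsHermitian, conjTranspose_eq_transpose_of_trivial] using hM.isHermitian
  have hpos : 0 < (x - a) ⬝ᵥ M *ᵥ (x - a) := by
    simpa using hM.dotProduct_mulVec_pos (sub_ne_zero.mpr hne)
  rw [← sub_add_cancel x a, hsymm.add_dotProduct_mulVec_add]
  linarith

theorem stmt14_general {N : ℕ} (Km : Matrix (Fin N) (Fin N) ℝ)
    (hpd : Km.PosDef)
    (y : Fin N → ℝ) (l : ℝ) (hl : 0 < l)
    (hh xh : Fin N → ℝ)
    (hhh : hh = (Km + l • (1 : Matrix (Fin N) (Fin N) ℝ))⁻¹.mulVec y)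
    (hxh : xh = Km.mulVec hh)
    (Δ : ℝ) (hΔ : Δ = l * Real.sqrt (hh ⬝ᵥ hh)) :
    Real.sqrt ((xh - y) ⬝ᵥ (xh - y)) ≤ Δ ∧
    (∀ x : Fin N → ℝ, Real.sqrt ((x - y) ⬝ᵥ (x - y)) ≤ Δ → x ≠ xh →
      xh ⬝ᵥ Km⁻¹.mulVec xh < x ⬝ᵥ Km⁻¹.mulVec x) := by
  have hreg : (Km + l • 1).PosDef := hpd.add (PosDef.one.smul hl)
  have hxh_eq : xh = y - l • hh := by
    rw [hxh, hhh, mulVec_nonsing_inv_add_smul_one_mulVec hreg.det_pos.ne'.isUnit]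
  have hKinv : Km⁻¹ *ᵥ xh = hh := by
    rw [hxh, mulVec_mulVec, nonsing_inv_mul _ hpd.det_pos.ne'.isUnit, one_mulVec]
  refine ⟨?_, fun x hx hne => ?_⟩
  · rw [hxh_eq, sub_sub_cancel_left, neg_dotProduct, dotProduct_neg, neg_neg,
      sqrt_dotProduct_smul_self hl.le, hΔ]
  · refine hpd.inv.dotProduct_mulVec_lt_of_sub_dotProduct_nonneg ?_ hne
    rw [hKinv, hxh_eq]
    exact sub_dotProduct_nonneg_of_sqrt_le (hΔ ▸ hx)

/-- With `x̂ = 𝐊(𝐊 + λI)⁻¹y` and `Δ = λ‖(𝐊+λI)⁻¹y‖₂`, the vector `x̂` is the unique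
minimizer of `x ↦ xᵀ𝐊⁻¹x` over the closed Euclidean ball `B₂(y, Δ)`. -/
theorem stmt14 {N : ℕ} (Km : Matrix (Fin N) (Fin N) ℝ)
    (hsym : Km.IsSymm) (hpd : Km.PosDef)
    (y : Fin N → ℝ) (hy : y ≠ 0) (l : ℝ) (hl : 0 < l)
    (hh xh : Fin N → ℝ)
    (hhh : hh = (Km + l • (1 : Matrix (Fin N) (Fin N) ℝ))⁻¹.mulVec y)
    (hxh : xh = Km.mulVec hh)
    (Δ : ℝ) (hΔ : Δ = l * Real.sqrt (hh ⬝ᵥ hh)) :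
    Real.sqrt ((xh - y) ⬝ᵥ (xh - y)) ≤ Δ ∧
    (∀ x : Fin N → ℝ, Real.sqrt ((x - y) ⬝ᵥ (x - y)) ≤ Δ → x ≠ xh →
      xh ⬝ᵥ Km⁻¹.mulVec xh < x ⬝ᵥ Km⁻¹.mulVec x) :=
  stmt14_general Km hpd y l hl hh xh hhh hxh Δ hΔ
end

section
/- Let 𝐊 be symmetric positive definite, y ∈ ℝ^N, Δ > 0, and C = {x : ‖x - y‖_∞ ≤ Δ} (the ℓ∞ ball). Suppose h̃ = 𝐊⁻¹y has all entries nonzero and Δ ≤ (minᵢ |h̃ᵢ|) / (maxⱼ Σₙ |(𝐊⁻¹)_{jn}|). Then the minimizer x̂ of xᵀ𝐊⁻¹x over C is given componentwise by x̂ₙ = yₙ - Δ·sgn(h̃ₙ). -/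
/-!
With `A = 𝐊⁻¹`, the minimizer of the convex quadratic `xᵀAx` over the box is characterized by the
variational inequality `(A x̂)ᵀ(x - x̂) ≥ 0`. For `x̂ = y - Δ s` with `s = sgn h̃`, this inequality
holds term by term as soon as `ĥ = A x̂` has the sign pattern `s`, since then
`ĥₙ (xₙ - x̂ₙ) = ĥₙ (xₙ - yₙ) + Δ |ĥₙ| ≥ 0`. And `ĥ - h̃ = -Δ A s` has entries bounded by
`Δ maxⱼ Σₙ |Aⱼₙ| ≤ minᵢ |h̃ᵢ|`, too small to flip any sign of `h̃`.
-/

open Matrix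

variable {ι m n : Type*} [Fintype ι] [Fintype n]

theorem Real.sign_mul_eq_abs_of_abs_sub_le {a b : ℝ} (h : |b - a| ≤ |a|) :
    Real.sign a * b = |b| := by
  rcases lt_trichotomy a 0 with ha | rfl | ha
  · have hb : b ≤ 0 := by linarith [(abs_le.mp h).2, abs_of_neg ha]
    rw [Real.sign_of_neg ha, abs_of_nonpos hb, neg_one_mul]
  · rw [sub_zero, abs_zero, abs_nonpos_iff] at h
    simp [h]
  · have hb : 0 ≤ b := by linarith [(abs_le.mp h).1, abs_of_pos ha]
    rw [Real.sign_of_pos ha, abs_of_nonneg hb, one_mul]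

theorem Real.abs_sign_le_one (r : ℝ) : |Real.sign r| ≤ 1 := by
  rcases Real.sign_apply_eq r with h | h | h <;> simp [h]

theorem Matrix.abs_mulVec_apply_le_sum_abs (A : Matrix m n ℝ) {s : n → ℝ}
    (hs : ∀ k, |s k| ≤ 1) (i : m) : |(A *ᵥ s) i| ≤ ∑ k, |A i k| :=
  calc |(A *ᵥ s) i| = |∑ k, A i k * s k| := rfl
    _ ≤ ∑ k, |A i k * s k| := Finset.abs_sum_le_sum_abs _ _
    _ ≤ ∑ k, |A i k| := Finset.sum_le_sum fun k _ => by
        rw [abs_mul]; exact mul_le_of_le_one_right (abs_nonneg _) (hs k)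

theorem Matrix.abs_mulVec_sub_smul_apply_sub_le (A : Matrix m n ℝ) (y : n → ℝ) {s : n → ℝ}
    (hs : ∀ k, |s k| ≤ 1) {Δ : ℝ} (hΔ : 0 ≤ Δ) (i : m) :
    |(A *ᵥ (y - Δ • s)) i - (A *ᵥ y) i| ≤ Δ * ∑ k, |A i k| := by
  rw [mulVec_sub, mulVec_smul, Pi.sub_apply, sub_sub_cancel_left, abs_neg, Pi.smul_apply,
    smul_eq_mul, abs_mul, abs_of_nonneg hΔ]
  exact mul_le_mul_of_nonneg_left (A.abs_mulVec_apply_le_sum_abs hs i) hΔ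

theorem Matrix.PosSemidef.dotProduct_mulVec_le_of_nonneg {A : Matrix ι ι ℝ} (hA : A.PosSemidef)
    {x₀ x : ι → ℝ} (h : 0 ≤ (A *ᵥ x₀) ⬝ᵥ (x - x₀)) : x₀ ⬝ᵥ A *ᵥ x₀ ≤ x ⬝ᵥ A *ᵥ x := by
  obtain ⟨d, rfl⟩ : ∃ d, x = x₀ + d := ⟨x - x₀, (add_sub_cancel x₀ x).symm⟩
  rw [add_sub_cancel_left] at h
  have hsymm : x₀ ⬝ᵥ A *ᵥ d = (A *ᵥ x₀) ⬝ᵥ d := by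
    rw [dotProduct_mulVec, ← mulVec_transpose, ← conjTranspose_eq_transpose_of_trivial,
      hA.isHermitian.eq, dotProduct_comm]
  have hd : 0 ≤ d ⬝ᵥ A *ᵥ d := by simpa using hA.dotProduct_mulVec_nonneg d
  calc x₀ ⬝ᵥ A *ᵥ x₀ ≤ x₀ ⬝ᵥ A *ᵥ x₀ + 2 * ((A *ᵥ x₀) ⬝ᵥ d) + d ⬝ᵥ A *ᵥ d := by linarith
    _ = (x₀ + d) ⬝ᵥ A *ᵥ (x₀ + d) := by
      rw [mulVec_add, add_dotProduct, dotProduct_add, dotProduct_add, hsymm,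
        dotProduct_comm d (A *ᵥ x₀)]
      ring

theorem dotProduct_sub_sub_smul_nonneg {h s y x : ι → ℝ} {Δ : ℝ} (hs : ∀ k, s k * h k = |h k|)
    (hx : ∀ k, |x k - y k| ≤ Δ) : 0 ≤ h ⬝ᵥ (x - (y - Δ • s)) :=
  Finset.sum_nonneg fun k _ => by
    have hk : h k * (x - (y - Δ • s)) k = h k * (x k - y k) + Δ * |h k| := by
      simp only [Pi.sub_apply, Pi.smul_apply, smul_eq_mul, ← hs k]
      ring
    have hlow : -(|h k| * |x k - y k|) ≤ h k * (x k - y k) := abs_mul (h k) _ ▸ neg_abs_le _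
    have hmul : |h k| * |x k - y k| ≤ |h k| * Δ := mul_le_mul_of_nonneg_left (hx k) (abs_nonneg _)
    rw [hk]
    linarith

theorem stmt17_general {N : ℕ} [NeZero N] (Km : Matrix (Fin N) (Fin N) ℝ)
    (hpd : Km.PosDef)
    (y : Fin N → ℝ) (Δ : ℝ) (hΔpos : 0 < Δ)
    (C : Set (Fin N → ℝ)) (hC : C = {x : Fin N → ℝ | ∀ n, |x n - y n| ≤ Δ})
    (ht : Fin N → ℝ) (hht : ht = Km⁻¹.mulVec y)
    (hΔ : Δ ≤ (Finset.univ.inf' Finset.univ_nonempty fun i => |ht i|) /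
      (Finset.univ.sup' Finset.univ_nonempty fun j => ∑ n, |Km⁻¹ j n|))
    (xh : Fin N → ℝ) (hxh : xh = fun n => y n - Δ * Real.sign (ht n)) :
    xh ∈ C ∧ ∀ x ∈ C, xh ⬝ᵥ Km⁻¹.mulVec xh ≤ x ⬝ᵥ Km⁻¹.mulVec x := by
  set s : Fin N → ℝ := fun n => Real.sign (ht n)
  have hs : ∀ n, |s n| ≤ 1 := fun n => Real.abs_sign_le_one _
  obtain rfl : xh = y - Δ • s := hxh
  subst hC
  refine ⟨fun n => ?_, fun x hx => ?_⟩
  · simpa [abs_mul, abs_of_pos hΔpos] using mul_le_mul_of_nonneg_left (hs n) hΔpos.le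
  have hΔmul : Δ * (Finset.univ.sup' Finset.univ_nonempty fun j => ∑ n, |Km⁻¹ j n|) ≤
      Finset.univ.inf' Finset.univ_nonempty fun i => |ht i| :=
    mul_le_of_le_div₀ (Finset.le_inf' _ _ fun i _ => abs_nonneg _)
      (Finset.le_sup'_of_le _ (Finset.mem_univ (0 : Fin N)) (by positivity)) hΔ
  have hclose : ∀ n, |(Km⁻¹ *ᵥ (y - Δ • s)) n - ht n| ≤ |ht n| := fun n =>
    calc |(Km⁻¹ *ᵥ (y - Δ • s)) n - ht n| ≤ Δ * ∑ k, |Km⁻¹ n k| :=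
          hht ▸ Km⁻¹.abs_mulVec_sub_smul_apply_sub_le y hs hΔpos.le n
      _ ≤ Δ * Finset.univ.sup' Finset.univ_nonempty fun j => ∑ k, |Km⁻¹ j k| :=
          mul_le_mul_of_nonneg_left (Finset.le_sup' (fun j => ∑ k, |Km⁻¹ j k|)
            (Finset.mem_univ n)) hΔpos.le
      _ ≤ |ht n| := hΔmul.trans (Finset.inf'_le _ (Finset.mem_univ n))
  exact hpd.inv.posSemidef.dotProduct_mulVec_le_of_nonneg
    (dotProduct_sub_sub_smul_nonneg (fun n => Real.sign_mul_eq_abs_of_abs_sub_le (hclose n)) hx)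

/-- For the ℓ∞ ball `C = {x : ‖x - y‖_∞ ≤ Δ}`, if `h̃ = 𝐊⁻¹y` has all entries nonzero and
`Δ` is small enough, namely `Δ ≤ (minᵢ |h̃ᵢ|) / (maxⱼ Σₙ |(𝐊⁻¹)ⱼₙ|)`, then the minimizer
of `x ↦ xᵀ𝐊⁻¹x` over `C` is `x̂ₙ = yₙ - Δ·sgn(h̃ₙ)`. -/
theorem stmt17 {N : ℕ} [NeZero N] (Km : Matrix (Fin N) (Fin N) ℝ)
    (hsym : Km.IsSymm) (hpd : Km.PosDef)
    (y : Fin N → ℝ) (Δ : ℝ) (hΔpos : 0 < Δ)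
    (C : Set (Fin N → ℝ)) (hC : C = {x : Fin N → ℝ | ∀ n, |x n - y n| ≤ Δ})
    (ht : Fin N → ℝ) (hht : ht = Km⁻¹.mulVec y) (hnz : ∀ n, ht n ≠ 0)
    (hΔ : Δ ≤ (Finset.univ.inf' Finset.univ_nonempty fun i => |ht i|) /
      (Finset.univ.sup' Finset.univ_nonempty fun j => ∑ n, |Km⁻¹ j n|))
    (xh : Fin N → ℝ) (hxh : xh = fun n => y n - Δ * Real.sign (ht n)) :
    xh ∈ C ∧ ∀ x ∈ C, xh ⬝ᵥ Km⁻¹.mulVec xh ≤ x ⬝ᵥ Km⁻¹.mulVec x :=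
  stmt17_general Km hpd y Δ hΔpos C hC ht hht hΔ xh hxh
end

section
/- Let 𝐊 = diag(σ₀²,…,σ_{N-1}²) with all σₙ² > 0, y ∈ ℝ^N, h̃ₙ = yₙ/σₙ², τ > 0, and define ĥₙ = h̃ₙ if |h̃ₙ| ≤ τ and ĥₙ = τ·sgn(h̃ₙ) otherwise; set x̂ = 𝐊ĥ and Δ = Σₙ σₙ²·max(|h̃ₙ| - τ, 0). Then x̂ minimizes xᵀ𝐊⁻¹x over the ℓ¹ ball C₁ = {x : Σₙ |xₙ - yₙ| ≤ Δ}, provided Δ > 0 and 0 ∉ C₁. -/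
open Matrix

/-!
On the ℓ¹ ball `C₁` around `y`, the pairing `x ↦ ĥ ⬝ᵥ x` is minimised at `x̂ = 𝐊ĥ`: since
`|ĥₙ| ≤ τ`, Hölder gives `ĥ ⬝ᵥ (x - y) ≥ -τΔ`, while clipping makes `ĥ ⬝ᵥ (y - x̂) = τΔ` exactly.
This variational inequality `ĥ ⬝ᵥ (x - x̂) ≥ 0` is the first-order condition for the convex
quadratic `xᵀ𝐊⁻¹x`, whose gradient at `x̂` is `2ĥ`, so `x̂` is its minimiser over `C₁`.
-/

noncomputable def clip (τ t : ℝ) : ℝ := if |t| ≤ τ then t else τ * Real.sign t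

section Clip

variable {τ : ℝ} (t : ℝ)

lemma clip_of_abs_le (h : |t| ≤ τ) : clip τ t = t := if_pos h

lemma clip_of_lt_abs (h : τ < |t|) : clip τ t = τ * Real.sign t := if_neg h.not_ge

lemma abs_clip_le (hτ : 0 ≤ τ) : |clip τ t| ≤ τ := by
  rcases le_or_gt |t| τ with h | h
  · rwa [clip_of_abs_le t h]
  · rcases Real.sign_apply_eq t with hsign | hsign | hsign <;>
      simp [clip_of_lt_abs t h, hsign, abs_of_nonneg hτ, hτ]

lemma sub_clip_of_lt_abs (hτ : 0 ≤ τ) (h : τ < |t|) :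
    t - clip τ t = Real.sign t * (|t| - τ) := by
  rw [clip_of_lt_abs t h]
  rcases lt_trichotomy t 0 with ht | ht | ht
  · rw [Real.sign_of_neg ht, abs_of_neg ht]; ring
  · rw [ht, abs_zero] at h; linarith
  · rw [Real.sign_of_pos ht, abs_of_pos ht]; ring

lemma abs_sub_clip (hτ : 0 ≤ τ) : |t - clip τ t| = max (|t| - τ) 0 := by
  rcases le_or_gt |t| τ with h | h
  · rw [clip_of_abs_le t h, sub_self, abs_zero, max_eq_right (by linarith)]
  · have ht : t ≠ 0 := by rintro rfl; rw [abs_zero] at h; linarith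
    rw [sub_clip_of_lt_abs t hτ h, max_eq_left (by linarith)]
    rcases Real.sign_apply_eq_of_ne_zero t ht with hsign | hsign <;>
      simp [hsign, abs_of_pos (sub_pos.mpr h), abs_sub_comm τ]

lemma clip_mul_sub_clip (hτ : 0 ≤ τ) : clip τ t * (t - clip τ t) = τ * max (|t| - τ) 0 := by
  rcases le_or_gt |t| τ with h | h
  · rw [clip_of_abs_le t h, sub_self, mul_zero, max_eq_right (by linarith), mul_zero]
  · have ht : t ≠ 0 := by rintro rfl; rw [abs_zero] at h; linarith
    rw [sub_clip_of_lt_abs t hτ h, clip_of_lt_abs t h, max_eq_left (by linarith)]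
    rcases Real.sign_apply_eq_of_ne_zero t ht with hsign | hsign <;> rw [hsign] <;> ring

end Clip

section DiagonalQuadratic

variable {ι : Type*} [Fintype ι] {s : ι → ℝ}

lemma inv_diagonal_of_ne_zero [DecidableEq ι] (hs : ∀ i, s i ≠ 0) :
    (diagonal s)⁻¹ = diagonal fun i ↦ (s i)⁻¹ := by
  refine inv_eq_right_inv ?_
  rw [diagonal_mul_diagonal, ← diagonal_one]
  exact congrArg diagonal (funext fun i ↦ mul_inv_cancel₀ (hs i))

lemma dotProduct_inv_diagonal_mulVec [DecidableEq ι] (hs : ∀ i, s i ≠ 0) (v : ι → ℝ) :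
    v ⬝ᵥ (diagonal s)⁻¹ *ᵥ v = ∑ i, v i ^ 2 / s i := by
  simp only [inv_diagonal_of_ne_zero hs, dotProduct, mulVec_diagonal]
  exact Finset.sum_congr rfl fun i _ ↦ by ring

lemma sum_sq_div_add_two_mul_le (hs : ∀ i, 0 < s i) (h x : ι → ℝ) :
    ∑ i, (s i * h i) ^ 2 / s i + 2 * ∑ i, h i * (x i - s i * h i) ≤ ∑ i, x i ^ 2 / s i := by
  rw [Finset.mul_sum, ← Finset.sum_add_distrib]
  refine Finset.sum_le_sum fun i _ ↦ ?_
  have hsq : x i ^ 2 / s i - ((s i * h i) ^ 2 / s i + 2 * (h i * (x i - s i * h i)))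
      = (x i - s i * h i) ^ 2 / s i := by
    field_simp [(hs i).ne']
    ring
  linarith [div_nonneg (sq_nonneg (x i - s i * h i)) (hs i).le]

end DiagonalQuadratic

lemma neg_mul_sum_abs_le_sum_mul {ι : Type*} [Fintype ι] {τ : ℝ} {h : ι → ℝ}
    (hh : ∀ i, |h i| ≤ τ) (v : ι → ℝ) : -(τ * ∑ i, |v i|) ≤ ∑ i, h i * v i := by
  rw [Finset.mul_sum, ← Finset.sum_neg_distrib]
  refine Finset.sum_le_sum fun i _ ↦ ?_
  have : |h i * v i| ≤ τ * |v i| := by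
    rw [abs_mul]; exact mul_le_mul_of_nonneg_right (hh i) (abs_nonneg _)
  linarith [neg_abs_le (h i * v i)]

lemma sum_mul_sub_nonneg_of_sum_abs_sub_le {ι : Type*} [Fintype ι] {τ Δ : ℝ} {h x y xh : ι → ℝ}
    (hh : ∀ i, |h i| ≤ τ) (hτ : 0 ≤ τ) (hx : ∑ i, |x i - y i| ≤ Δ)
    (hxh : ∑ i, h i * (y i - xh i) = τ * Δ) : 0 ≤ ∑ i, h i * (x i - xh i) := by
  have hsplit : ∑ i, h i * (x i - xh i) = ∑ i, h i * (x i - y i) + ∑ i, h i * (y i - xh i) := by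
    rw [← Finset.sum_add_distrib]
    exact Finset.sum_congr rfl fun i _ ↦ by ring
  linarith [neg_mul_sum_abs_le_sum_mul hh fun i ↦ x i - y i, mul_le_mul_of_nonneg_left hx hτ]

theorem stmt18_general {N : ℕ} (s : Fin N → ℝ) (hs : ∀ n, 0 < s n)
    (Km : Matrix (Fin N) (Fin N) ℝ) (hKm : Km = Matrix.diagonal s)
    (y : Fin N → ℝ) (τ : ℝ) (hτ : 0 < τ)
    (ht : Fin N → ℝ) (hht : ht = fun n => y n / s n)
    (hh : Fin N → ℝ)
    (hhh : hh = fun n => if |ht n| ≤ τ then ht n else τ * Real.sign (ht n))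
    (xh : Fin N → ℝ) (hxh : xh = Km.mulVec hh)
    (Δ : ℝ) (hΔ : Δ = ∑ n, s n * max (|ht n| - τ) 0)
    (C₁ : Set (Fin N → ℝ)) (hC₁ : C₁ = {x : Fin N → ℝ | ∑ n, |x n - y n| ≤ Δ}) :
    xh ∈ C₁ ∧ ∀ x ∈ C₁, xh ⬝ᵥ Km⁻¹.mulVec xh ≤ x ⬝ᵥ Km⁻¹.mulVec x := by
  subst hKm hC₁ hΔ
  have hhn : ∀ n, hh n = clip τ (ht n) := fun n ↦ congrFun hhh n
  have hxhn : ∀ n, xh n = s n * hh n := fun n ↦ by rw [hxh, mulVec_diagonal]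
  have hyn : ∀ n, y n = s n * ht n := fun n ↦ by rw [hht, mul_div_cancel₀ _ (hs n).ne']
  have hsub : ∀ n, y n - xh n = s n * (ht n - hh n) := fun n ↦ by rw [hxhn, hyn]; ring
  have hxh_mem : ∑ n, |xh n - y n| = ∑ n, s n * max (|ht n| - τ) 0 := by
    refine Finset.sum_congr rfl fun n _ ↦ ?_
    rw [abs_sub_comm, hsub, abs_mul, abs_of_pos (hs n), hhn, abs_sub_clip _ hτ.le]
  have hpair : ∑ n, hh n * (y n - xh n) = τ * ∑ n, s n * max (|ht n| - τ) 0 := by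
    rw [Finset.mul_sum]
    refine Finset.sum_congr rfl fun n _ ↦ ?_
    rw [hsub, mul_left_comm, hhn, clip_mul_sub_clip _ hτ.le]; ring
  refine ⟨hxh_mem.le, fun x hx ↦ ?_⟩
  have hvar : 0 ≤ ∑ n, hh n * (x n - xh n) :=
    sum_mul_sub_nonneg_of_sum_abs_sub_le (fun n ↦ hhn n ▸ abs_clip_le (ht n) hτ.le) hτ.le hx hpair
  have hs0 : ∀ n, s n ≠ 0 := fun n ↦ (hs n).ne'
  rw [dotProduct_inv_diagonal_mulVec hs0, dotProduct_inv_diagonal_mulVec hs0]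
  simp only [hxhn] at hvar ⊢
  linarith [sum_sq_div_add_two_mul_le hs hh x]

/-- For a diagonal Gram matrix `𝐊 = diag(σ₀²,…)`, the clipped version `ĥ` of the nominal
coefficient vector `h̃ = 𝐊⁻¹y` (clipping threshold `τ`) yields, via `x̂ = 𝐊ĥ`, the
minimizer of `xᵀ𝐊⁻¹x` over the ℓ¹ ball `C₁ = {x : Σₙ|xₙ - yₙ| ≤ Δ}` with
`Δ = Σₙ σₙ²·(|h̃ₙ| - τ)⁺`, provided `Δ > 0` and `0 ∉ C₁`. -/
theorem stmt18 {N : ℕ} (s : Fin N → ℝ) (hs : ∀ n, 0 < s n)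
    (Km : Matrix (Fin N) (Fin N) ℝ) (hKm : Km = Matrix.diagonal s)
    (y : Fin N → ℝ) (τ : ℝ) (hτ : 0 < τ)
    (ht : Fin N → ℝ) (hht : ht = fun n => y n / s n)
    (hh : Fin N → ℝ)
    (hhh : hh = fun n => if |ht n| ≤ τ then ht n else τ * Real.sign (ht n))
    (xh : Fin N → ℝ) (hxh : xh = Km.mulVec hh)
    (Δ : ℝ) (hΔ : Δ = ∑ n, s n * max (|ht n| - τ) 0) (hΔpos : 0 < Δ)
    (C₁ : Set (Fin N → ℝ)) (hC₁ : C₁ = {x : Fin N → ℝ | ∑ n, |x n - y n| ≤ Δ})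
    (h0 : (0 : Fin N → ℝ) ∉ C₁) :
    xh ∈ C₁ ∧ ∀ x ∈ C₁, xh ⬝ᵥ Km⁻¹.mulVec xh ≤ x ⬝ᵥ Km⁻¹.mulVec x :=
  stmt18_general s hs Km hKm y τ hτ ht hht hh hhh xh hxh Δ hΔ C₁ hC₁
end
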